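/- Let k ≥ 2 and let ℓ and m be k-subsets with ℓ_i = m_j for some indices 1 ≤ i, j ≤ k. Let ℓ̃ and m̃ be the (k−1)-subsets obtained by deleting the i-th entry of ℓ and the j-th entry of m respectively. Then β(ℓ̃, m̃) = β(ℓ,m) − 1. -/

import Mathlib

/-- `β(ℓ,m)`: the largest `p ∈ {1,…,k}` such that `ℓ i ≥ m j` for all `1 ≤ i,j ≤ k`
with `i − j = k − p`, and `0` if no such `p` exists. -/
noncomputable def kBeta (k : ℕ) (ℓ m : Fin k → ℤ) : ℕ :=
  sSup {p : ℕ | 1 ≤ p ∧ p ≤ k ∧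
    ∀ i j : Fin k, (i.val : ℤ) - (j.val : ℤ) = (k : ℤ) - (p : ℤ) → m j ≤ ℓ i}

/-!
Write `d = k - p`, so that `p` is admissible in `β(ℓ, m)` exactly when `ℓ` dominates `m` along
the shift `d`, i.e. `m b ≤ ℓ (b + d)` for all `b`. Deleting the common value `ℓ i = m j` does not
change which shifts are dominating: entries of `m` at or below `j` are bounded by
`m j = ℓ i`, entries of `ℓ` at or above `i` bound it, and away from these two regions the deletion
only moves indices in a way compatible with monotonicity. The largest shift `d = k - 1` is always
dominating (`m 0 ≤ m j = ℓ i ≤ ℓ (k - 1)`), so the admissible `p` for `(ℓ̃, m̃)` are exactly the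
admissible `p ≥ 2` for `(ℓ, m)`, shifted down by one.
-/

theorem Nat.sSup_add_one_eq_of_mem_iff {S T : Set ℕ} (hS : BddAbove S) (hS₁ : 1 ∈ S)
    (hT : ∀ p, p ∈ T ↔ 1 ≤ p ∧ p + 1 ∈ S) : sSup T + 1 = sSup S := by
  have hTS : ∀ p ∈ T, p + 1 ≤ sSup S := fun p hp => le_csSup hS ((hT p).1 hp).2
  rcases (le_csSup hS hS₁).eq_or_lt with hSup | hSup
  · have hT_empty : T = ∅ :=
      Set.eq_empty_of_forall_notMem fun p hp => by
        have := hTS p hp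
        have := ((hT p).1 hp).1
        omega
    rw [hT_empty, csSup_empty, ← hSup]
    rfl
  · have hmem : sSup S - 1 ∈ T :=
      (hT _).2 ⟨by omega, by rw [Nat.sub_add_cancel hSup.le]; exact Nat.sSup_mem ⟨1, hS₁⟩ hS⟩
    have hT_bdd : BddAbove T := ⟨sSup S, fun p hp => (hTS p hp).trans' p.le_succ⟩
    have := le_antisymm (csSup_le ⟨_, hmem⟩ fun p hp => Nat.le_sub_one_of_lt (hTS p hp))
      (le_csSup hT_bdd hmem)
    omega

theorem Fin.val_succAbove_cases {n : ℕ} (p : Fin (n + 1)) (x : Fin n) :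
    ((x : ℕ) < p ∧ (p.succAbove x : ℕ) = x) ∨ ((p : ℕ) ≤ x ∧ (p.succAbove x : ℕ) = x + 1) := by
  rcases lt_or_ge (x : ℕ) p with hx | hx
  · exact .inl ⟨hx, by rw [succAbove_of_castSucc_lt _ _ (by simpa [Fin.lt_def] using hx)]; rfl⟩
  · exact .inr ⟨hx, by rw [succAbove_of_le_castSucc _ _ (by simpa [Fin.le_def] using hx)]; rfl⟩

variable {k n : ℕ}

def ShiftDominates (ℓ m : Fin k → ℤ) (d : ℕ) : Prop :=
  ∀ a b : Fin k, (a : ℕ) = b + d → m b ≤ ℓ a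

theorem kBeta_eq_sSup_shiftDominates (ℓ m : Fin k → ℤ) :
    kBeta k ℓ m = sSup {p | 1 ≤ p ∧ p ≤ k ∧ ShiftDominates ℓ m (k - p)} := by
  unfold kBeta ShiftDominates
  congr 1
  ext p
  refine and_congr_right fun _ => and_congr_right fun hp => forall₂_congr fun a b => ?_
  exact imp_congr_left (by omega)

theorem shiftDominates_of_le {ℓ m : Fin (n + 1) → ℤ} (hℓ : Monotone ℓ) (hm : Monotone m)
    {i j : Fin (n + 1)} (h : m j ≤ ℓ i) : ShiftDominates ℓ m n := fun a b hab =>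
  calc m b ≤ m j := hm (Fin.le_def.2 (by omega))
    _ ≤ ℓ i := h
    _ ≤ ℓ a := hℓ (Fin.le_def.2 (by omega))

section Delete

variable {ℓ m : Fin (n + 1) → ℤ} {i j : Fin (n + 1)} {d : ℕ}

theorem ShiftDominates.of_comp_succAbove (hℓ : Monotone ℓ) (hm : Monotone m) (h : ℓ i = m j)
    (H : ShiftDominates (ℓ ∘ i.succAbove) (m ∘ j.succAbove) d) : ShiftDominates ℓ m d := by
  intro a b hab
  rcases lt_or_ge (j : ℕ) b with hjb | hbj
  · obtain ⟨a', ha'⟩ : ∃ a' : Fin n, (a' : ℕ) = a - 1 := ⟨⟨a - 1, by omega⟩, rfl⟩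
    obtain ⟨b', hb'⟩ : ∃ b' : Fin n, (b' : ℕ) = b - 1 := ⟨⟨b - 1, by omega⟩, rfl⟩
    have hsa := Fin.val_succAbove_cases i a'
    have hsb := Fin.val_succAbove_cases j b'
    calc m b = m (j.succAbove b') := congrArg m (Fin.ext (by omega))
      _ ≤ ℓ (i.succAbove a') := H a' b' (by omega)
      _ ≤ ℓ a := hℓ (Fin.le_def.2 (by omega))
  rcases lt_or_ge (a : ℕ) i with hai | hia
  · obtain ⟨a', ha'⟩ : ∃ a' : Fin n, (a' : ℕ) = a := ⟨⟨a, by omega⟩, rfl⟩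
    obtain ⟨b', hb'⟩ : ∃ b' : Fin n, (b' : ℕ) = b := ⟨⟨b, by omega⟩, rfl⟩
    have hsa := Fin.val_succAbove_cases i a'
    have hsb := Fin.val_succAbove_cases j b'
    calc m b ≤ m (j.succAbove b') := hm (Fin.le_def.2 (by omega))
      _ ≤ ℓ (i.succAbove a') := H a' b' (by omega)
      _ = ℓ a := congrArg ℓ (Fin.ext (by omega))
  · calc m b ≤ m j := hm (Fin.le_def.2 hbj)
      _ = ℓ i := h.symm
      _ ≤ ℓ a := hℓ (Fin.le_def.2 hia)

theorem ShiftDominates.comp_succAbove (hℓ : StrictMono ℓ) (h : ℓ i = m j)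
    (H : ShiftDominates ℓ m d) : ShiftDominates (ℓ ∘ i.succAbove) (m ∘ j.succAbove) d := by
  intro a b hab
  have hsa := Fin.val_succAbove_cases i a
  have hsb := Fin.val_succAbove_cases j b
  rcases lt_or_ge (b : ℕ) j with hbj | hjb
  · calc m (j.succAbove b) ≤ ℓ a.castSucc := H _ _ (by simp only [Fin.val_castSucc]; omega)
      _ ≤ ℓ (i.succAbove a) := hℓ.monotone (Fin.le_def.2 (by simp only [Fin.val_castSucc]; omega))
  rcases lt_or_ge (a : ℕ) i with hai | hia
  · -- the shift `d` would carry `j` strictly below `i`, where `ℓ < ℓ i = m j`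
    have hji : (j : ℕ) + d < i := by omega
    have := H ⟨j + d, by omega⟩ j rfl
    have := hℓ (show (⟨j + d, by omega⟩ : Fin (n + 1)) < i from Fin.lt_def.2 hji)
    omega
  · calc m (j.succAbove b) ≤ ℓ a.succ := H _ _ (by simp only [Fin.val_succ]; omega)
      _ = ℓ (i.succAbove a) := congrArg ℓ (Fin.ext (by simp only [Fin.val_succ]; omega))

theorem shiftDominates_comp_succAbove_iff (hℓ : StrictMono ℓ) (hm : Monotone m) (h : ℓ i = m j) :
    ShiftDominates (ℓ ∘ i.succAbove) (m ∘ j.succAbove) d ↔ ShiftDominates ℓ m d :=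
  ⟨.of_comp_succAbove hℓ.monotone hm h, .comp_succAbove hℓ h⟩

end Delete

theorem beta_delete_eq (n : ℕ) (ℓ m : Fin (n + 1) → ℤ)
    (hℓ : StrictMono ℓ) (hm : StrictMono m) (i j : Fin (n + 1)) (h : ℓ i = m j) :
    (kBeta n (ℓ ∘ i.succAbove) (m ∘ j.succAbove) : ℤ) = (kBeta (n + 1) ℓ m : ℤ) - 1 := by
  suffices kBeta n (ℓ ∘ i.succAbove) (m ∘ j.succAbove) + 1 = kBeta (n + 1) ℓ m by omega
  rw [kBeta_eq_sSup_shiftDominates, kBeta_eq_sSup_shiftDominates]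
  refine Nat.sSup_add_one_eq_of_mem_iff ⟨n + 1, fun p hp => hp.2.1⟩
    ⟨le_rfl, by omega, by simpa using shiftDominates_of_le hℓ.monotone hm.monotone h.ge⟩
    fun p => ?_
  simp only [Set.mem_ofPred_eq, shiftDominates_comp_succAbove_iff hℓ hm.monotone h,
    Nat.add_sub_add_right, le_add_iff_nonneg_left, zero_le, Nat.add_le_add_iff_right, true_and]
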